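/- Assume ∑_{i=0}^N l_i(x) = 1 for all x ∈ [a,b]. Then the image of the span U_l of l_0, …, l_N (as functions on [a,b]) under differentiation equals the span U_h of the histopolation functions h_1, …, h_N: every derivative of a function in U_l lies in the span of h_1, …, h_N, and every h_i is the derivative of a function in U_l. -/

import Mathlib

/-!
Since `∑ lᵢ ≡ 1`, the derivatives satisfy `∑ lᵢ' = 0`, so writing `Hⱼ := ∑_{k<j} l_k' = -hⱼ`
one has `H₀ = H_{N+1} = 0` and `lᵢ' = H_{i+1} - H_i`. Summation by parts then turns
`∑ cᵢ lᵢ'` into `∑_{j=1}^N (c_j - c_{j-1}) h_j`; conversely `h_j` is the derivative of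
`-∑_{i<j} lᵢ`.
-/

open Finset

section Summation

variable {R : Type*} [CommRing R]

theorem sum_range_succ_mul_eq_sum_Icc_of_sum_eq_zero (c g : ℕ → R) (N : ℕ)
    (hg : ∑ i ∈ range (N + 1), g i = 0) :
    ∑ i ∈ range (N + 1), c i * g i
      = ∑ j ∈ Icc 1 N, (c j - c (j - 1)) * -∑ k ∈ range j, g k := by
  have hparts := sum_range_by_parts c g (N + 1)
  simp only [smul_eq_mul, Nat.add_sub_cancel, hg, mul_zero, zero_sub] at hparts
  rw [hparts, ← Ico_add_one_right_eq_Icc, sum_Ico_eq_sum_range]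
  simp only [mul_neg, sum_neg_distrib, add_comm 1, Nat.add_sub_cancel]

theorem sum_range_ite_lt_neg_one_mul (g : ℕ → R) {n j : ℕ} (hj : j ≤ n) :
    ∑ i ∈ range n, (if i < j then (-1 : R) else 0) * g i = -∑ i ∈ range j, g i := by
  simp only [ite_mul, neg_one_mul, zero_mul, ← sum_filter, ← sum_neg_distrib]
  congr 1
  ext i
  simp only [mem_filter, mem_range]
  omega

end Summation

section DerivWithin

variable {𝕜 ι : Type*} [NontriviallyNormedField 𝕜] {u : Finset ι} {f : ι → 𝕜 → 𝕜}
  {s : Set 𝕜} {t : 𝕜}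

theorem derivWithin_sum_const_mul (c : ι → 𝕜)
    (hf : ∀ i ∈ u, DifferentiableWithinAt 𝕜 (f i) s t) :
    derivWithin (fun y => ∑ i ∈ u, c i * f i y) s t = ∑ i ∈ u, c i * derivWithin (f i) s t := by
  rw [derivWithin_fun_sum fun i hi => (hf i hi).const_mul (c i)]
  exact sum_congr rfl fun i hi => derivWithin_const_mul (c i) (hf i hi)

theorem sum_derivWithin_eq_zero_of_sum_eqOn_const {C : 𝕜}
    (hf : ∀ i ∈ u, DifferentiableWithinAt 𝕜 (f i) s t)
    (hsum : ∀ y ∈ s, ∑ i ∈ u, f i y = C) (ht : t ∈ s) :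
    ∑ i ∈ u, derivWithin (f i) s t = 0 := by
  rw [← derivWithin_fun_sum hf, derivWithin_congr hsum (hsum t ht)]
  exact congrFun (derivWithin_fun_const s C) t

end DerivWithin

theorem derivative_image_of_lagrange_span_general
    (N : ℕ) (a b : ℝ)
    (l : ℕ → ℝ → ℝ)
    (hC1 : ∀ i ≤ N, ContDiffOn ℝ 1 (l i) (Set.Icc a b))
    (h : ℕ → ℝ → ℝ)
    (hdef : ∀ i, 1 ≤ i → i ≤ N → ∀ t : ℝ,
      h i t = -∑ j ∈ Finset.range i, derivWithin (l j) (Set.Icc a b) t)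
    (hone : ∀ t ∈ Set.Icc a b, ∑ i ∈ Finset.range (N + 1), l i t = 1) :
    (∀ c : ℕ → ℝ, ∃ d : ℕ → ℝ, ∀ t ∈ Set.Icc a b,
      derivWithin (fun s => ∑ i ∈ Finset.range (N + 1), c i * l i s) (Set.Icc a b) t
        = ∑ j ∈ Finset.Icc 1 N, d j * h j t) ∧
    (∀ j, 1 ≤ j → j ≤ N → ∃ c : ℕ → ℝ, ∀ t ∈ Set.Icc a b,
      h j t = derivWithin (fun s => ∑ i ∈ Finset.range (N + 1), c i * l i s)
        (Set.Icc a b) t) := by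
  have hdiff : ∀ t ∈ Set.Icc a b, ∀ i ∈ range (N + 1),
      DifferentiableWithinAt ℝ (l i) (Set.Icc a b) t := fun t ht i hi =>
    (hC1 i (Nat.lt_succ_iff.mp (mem_range.mp hi))).differentiableOn one_ne_zero t ht
  constructor
  · intro c
    refine ⟨fun j => c j - c (j - 1), fun t ht => ?_⟩
    rw [derivWithin_sum_const_mul c (hdiff t ht), sum_range_succ_mul_eq_sum_Icc_of_sum_eq_zero
      c _ N (sum_derivWithin_eq_zero_of_sum_eqOn_const (hdiff t ht) hone ht)]
    refine sum_congr rfl fun j hj => ?_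
    obtain ⟨hj1, hjN⟩ := mem_Icc.mp hj
    rw [hdef j hj1 hjN t]
  · intro j hj1 hjN
    refine ⟨fun i => if i < j then -1 else 0, fun t ht => ?_⟩
    rw [derivWithin_sum_const_mul _ (hdiff t ht), sum_range_ite_lt_neg_one_mul _ (by omega),
      hdef j hj1 hjN t]

/-- Assuming `∑ l i ≡ 1` on `[a,b]`, the image under differentiation of
the span `U_l` of `l 0, …, l N` equals the span `U_h` of `h 1, …, h N` (as functions
on `[a,b]`): the derivative of every element of `U_l` lies in `U_h`, and every `h j`
is the derivative of an element of `U_l`. -/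
theorem derivative_image_of_lagrange_span
    (N : ℕ) (hN : 1 ≤ N) (a b : ℝ) (x : ℕ → ℝ)
    (hx0 : x 0 = a) (hxN : x N = b)
    (hgrid : ∀ i, i < N → x i < x (i + 1))
    (l : ℕ → ℝ → ℝ)
    (hC1 : ∀ i ≤ N, ContDiffOn ℝ 1 (l i) (Set.Icc a b))
    (hlag : ∀ i ≤ N, ∀ j ≤ N, l i (x j) = if i = j then (1 : ℝ) else 0)
    (h : ℕ → ℝ → ℝ)
    (hdef : ∀ i, 1 ≤ i → i ≤ N → ∀ t : ℝ,
      h i t = -∑ j ∈ Finset.range i, derivWithin (l j) (Set.Icc a b) t)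
    (hone : ∀ t ∈ Set.Icc a b, ∑ i ∈ Finset.range (N + 1), l i t = 1) :
    (∀ c : ℕ → ℝ, ∃ d : ℕ → ℝ, ∀ t ∈ Set.Icc a b,
      derivWithin (fun s => ∑ i ∈ Finset.range (N + 1), c i * l i s) (Set.Icc a b) t
        = ∑ j ∈ Finset.Icc 1 N, d j * h j t) ∧
    (∀ j, 1 ≤ j → j ≤ N → ∃ c : ℕ → ℝ, ∀ t ∈ Set.Icc a b,
      h j t = derivWithin (fun s => ∑ i ∈ Finset.range (N + 1), c i * l i s)
        (Set.Icc a b) t) :=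
  derivative_image_of_lagrange_span_general N a b l hC1 h hdef hone
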